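/- Let A_1, …, A_k be pairwise commuting N×N matrices with nonnegative integer entries forming an irreducible family, with every row sum of every A_i at least 2 and with A = A_1⋯A_k irreducible; let x be the unimodular Perron–Frobenius eigenvector and let M be the Borel probability measure on X_B determined by the cylinder formula. Then in L²(X_B, M): 𝒱_0 = E_{−1} ⊕ E_0 (an orthogonal direct sum), and for every n ∈ ℕ, 𝒲_n equals the linear span of the union of the subspaces E_γ over all γ ∈ FB with nk ≤ |γ| ≤ (n+1)k − 1. -/

import Mathlib

open scoped Classical ENNReal Topology
open TopologicalSpace MeasureTheory Filter Set
open Fin.NatCast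

namespace KBratteli

variable (k N : ℕ) [NeZero k] (A : Fin k → Matrix (Fin N) (Fin N) ℕ)

/-- An edge at level `n` of the stationary `k`-Bratteli diagram of the matrices
`A 0, …, A (k-1)`: an element of `Edge k N A n` is an edge whose source lies in the
level-`(n+1)` vertex set and whose range lies in the level-`n` vertex set (both copies of
`Fin N`); there are exactly `A (n % k) p q` edges with range `p` and source `q`. -/
structure Edge (n : ℕ) : Type where
  rg : Fin N
  src : Fin N
  idx : Fin (A (n : Fin k) rg src)

/-- The infinite path space `X_B` of the stationary `k`-Bratteli diagram of `A`. -/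
def PathSpace : Type :=
  { x : (n : ℕ) → Edge k N A n // ∀ n, (x n).src = (x (n + 1)).rg }

/-- A finite path of length `ℓ` beginning at level `0`: a composable string of edges,
together with the vertices it visits.  Length-`0` paths are vertices of `V₀`. -/
structure FinPath (ℓ : ℕ) : Type where
  vtx : Fin (ℓ + 1) → Fin N
  edge : (i : Fin ℓ) → Edge k N A i
  rg_eq : ∀ i : Fin ℓ, (edge i).rg = vtx i.castSucc
  src_eq : ∀ i : Fin ℓ, (edge i).src = vtx i.succ

/-- `FB`: the set of all finite paths (of all lengths) beginning at level `0`. -/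
abbrev FB : Type := Σ ℓ : ℕ, FinPath k N A ℓ

variable {k N A}

/-- The source (final) vertex of a finite path. -/
def FinPath.src {ℓ : ℕ} (lam : FinPath k N A ℓ) : Fin N := lam.vtx (Fin.last ℓ)

/-- The range (initial, level-0) vertex of a finite path. -/
def FinPath.rg {ℓ : ℕ} (lam : FinPath k N A ℓ) : Fin N := lam.vtx 0

/-- The length-0 finite path at the level-0 vertex `v`. -/
def vertexPath (v : Fin N) : FinPath k N A 0 where
  vtx := fun _ => v
  edge := fun i => i.elim0
  rg_eq := fun i => i.elim0
  src_eq := fun i => i.elim0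

/-- The cylinder set `[λ]` of a finite path `λ`: all infinite paths with initial
segment `λ`. -/
def Cyl {ℓ : ℕ} (lam : FinPath k N A ℓ) : Set (PathSpace k N A) :=
  { x | (x.1 0).rg = lam.rg ∧ ∀ i : Fin ℓ, x.1 i = lam.edge i }

variable (k N A) in
/-- The collection of all cylinder sets. -/
def cylinderSets : Set (Set (PathSpace k N A)) :=
  { S | ∃ (ℓ : ℕ) (lam : FinPath k N A ℓ), S = Cyl lam }

/-- The cylinder-set topology on the infinite path space. -/
instance : TopologicalSpace (PathSpace k N A) :=
  generateFrom (cylinderSets k N A)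

/-- The Borel σ-algebra of the cylinder-set topology. -/
instance : MeasurableSpace (PathSpace k N A) := borel _

instance : BorelSpace (PathSpace k N A) := ⟨rfl⟩

lemma isOpen_cyl {ℓ : ℕ} (lam : FinPath k N A ℓ) : IsOpen (Cyl lam) :=
  isOpen_generateFrom_of_mem ⟨ℓ, lam, rfl⟩

lemma measurableSet_cyl {ℓ : ℕ} (lam : FinPath k N A ℓ) : MeasurableSet (Cyl lam) :=
  (isOpen_cyl lam).measurableSet

/-- Edges form a finite type. -/
def edgeEquiv (n : ℕ) : Edge k N A n ≃ Σ p : Fin N, Σ q : Fin N, Fin (A (n : Fin k) p q) where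
  toFun e := ⟨e.rg, e.src, e.idx⟩
  invFun t := ⟨t.1, t.2.1, t.2.2⟩
  left_inv e := rfl
  right_inv t := rfl

instance (n : ℕ) : Finite (Edge k N A n) :=
  @Finite.of_equiv _ _ (@Finite.instSigma _ _ _ fun _ => Finite.instSigma) (edgeEquiv n).symm

instance (ℓ : ℕ) : Finite (FinPath k N A ℓ) := by
  have hinj : Function.Injective
      (fun lam : FinPath k N A ℓ => (lam.vtx, lam.edge)) := by
    rintro ⟨v, e, h1, h2⟩ ⟨v', e', h1', h2'⟩ h
    simp only [Prod.mk.injEq] at h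
    obtain ⟨hv, he⟩ := h
    subst hv; subst he; rfl
  exact Finite.of_injective _ hinj

instance : Countable (FB k N A) := by infer_instance

/-- The initial segment of length `m` of an infinite path. -/
def prefixPath (x : PathSpace k N A) (m : ℕ) : FinPath k N A m where
  vtx := fun i => (x.1 i).rg
  edge := fun i => x.1 i
  rg_eq := fun _ => rfl
  src_eq := fun i => x.2 i

lemma mem_cyl_prefixPath (x : PathSpace k N A) (m : ℕ) : x ∈ Cyl (prefixPath x m) :=
  ⟨rfl, fun _ => rfl⟩

lemma measurableSet_coord (j : ℕ) (P : Edge k N A j → Prop) :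
    MeasurableSet { x : PathSpace k N A | P (x.1 j) } := by
  have h : { x : PathSpace k N A | P (x.1 j) }
      = ⋃ (lam : FinPath k N A (j + 1)) (_ : P (lam.edge (Fin.last j))), Cyl lam := by
    ext x
    simp only [Set.mem_setOf_eq, Set.mem_iUnion]
    constructor
    · intro hx
      exact ⟨prefixPath x (j + 1), hx, mem_cyl_prefixPath x (j + 1)⟩
    · rintro ⟨lam, hP, -, hedge⟩
      have hx : x.1 j = lam.edge (Fin.last j) := hedge (Fin.last j)
      rw [hx]; exact hP
  rw [h]
  exact MeasurableSet.iUnion fun lam => MeasurableSet.iUnion fun _ => measurableSet_cyl lam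

/-- The first level at which two infinite paths differ. -/
noncomputable def firstDiff (x y : PathSpace k N A) : ℕ := sInf { n | x.1 n ≠ y.1 n }

/-- The function `d_w` associated to a weight-type function `w` on finite paths:
`d_w(x,x) = 0`; `d_w(x,y) = 1` if `x` and `y` have no common initial sub-path (i.e. they
do not even start at the same level-0 vertex); and otherwise `d_w(x,y) = w(x ∧ y)`, the
value of `w` on the longest common initial sub-path of `x` and `y`. -/
noncomputable def distW (w : FB k N A → ℝ) (x y : PathSpace k N A) : ℝ :=
  if x = y then 0
  else if (x.1 0).rg = (y.1 0).rg then w ⟨firstDiff x y, prefixPath x (firstDiff x y)⟩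
  else 1

/-- `η` is an (initial) sub-path of `λ`. -/
def IsSubPath {m ℓ : ℕ} (η : FinPath k N A m) (lam : FinPath k N A ℓ) : Prop :=
  ∃ h : m ≤ ℓ, η.rg = lam.rg ∧ ∀ i : Fin m, η.edge i = lam.edge (Fin.castLE h i)

/-- `lam ∈ F_γ B` : the finite path `lam` extends `γ`. -/
def Extends {m : ℕ} (γ : FinPath k N A m) (lam : FB k N A) : Prop :=
  IsSubPath γ lam.2

/-- The spectral radius of a matrix of nonnegative integers, as a real number. -/
noncomputable def specRad {N : ℕ} (M : Matrix (Fin N) (Fin N) ℕ) : ℝ :=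
  (spectralRadius ℂ (M.map (Nat.cast : ℕ → ℂ))).toReal

/-- The weight `w_δ` on the stationary `k`-Bratteli diagram of `A`, relative to data
`ρ : Fin k → ℝ` (the spectral radii) and `xv : Fin N → ℝ` (the Perron–Frobenius
eigenvector): on a path `η` of length `q·k + t` (`0 ≤ t ≤ k-1`) it is
`(ρ₁^{q+1} ⋯ ρ_t^{q+1} · ρ_{t+1}^q ⋯ ρ_k^q)^{-1/δ} · xv (s η)`. -/
noncomputable def wt (δ : ℝ) (ρ : Fin k → ℝ) (xv : Fin N → ℝ) (lam : FB k N A) : ℝ :=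
  (∏ i : Fin k, ρ i ^ (if (i : ℕ) < lam.1 % k then lam.1 / k + 1 else lam.1 / k))
      ^ (-(1 / δ)) * xv lam.2.src

/-- The value `M([λ]) = (ρ₁⋯ρ_t)^{-(q+1)} (ρ_{t+1}⋯ρ_k)^{-q} · x_{s(λ)}` of the
measure `M` on the cylinder set of a path of length `q·k + t`. -/
noncomputable def Mval (ρ : Fin k → ℝ) (xv : Fin N → ℝ) (lam : FB k N A) : ℝ :=
  (∏ i : Fin k, ρ i ^ (if (i : ℕ) < lam.1 % k then lam.1 / k + 1 else lam.1 / k))⁻¹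
    * xv lam.2.src

/-- A family of matrices is irreducible if for every pair of indices some finite product
of matrices from the family has positive corresponding entry. -/
def IrreducibleFamily {k N : ℕ} (A : Fin k → Matrix (Fin N) (Fin N) ℕ) : Prop :=
  ∀ a b : Fin N, ∃ l : List (Fin k), 0 < (l.map A).prod a b

/-- A single square matrix with nonnegative integer entries is irreducible if for every
pair of indices some positive power has positive corresponding entry. -/
def MatIrreducible {N : ℕ} (B : Matrix (Fin N) (Fin N) ℕ) : Prop :=
  ∀ a b : Fin N, ∃ m : ℕ, 0 < m ∧ 0 < (B ^ m) a b

/-- The diameter (in `ℝ≥0∞`) of a set of infinite paths relative to `d_w`. -/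
noncomputable def diamW (w : FB k N A → ℝ) (U : Set (PathSpace k N A)) : ℝ≥0∞ :=
  ⨆ (x) (_ : x ∈ U) (y) (_ : y ∈ U), ENNReal.ofReal (distW w x y)

/-- The `t`-dimensional Hausdorff (outer) measure of a set `Z` relative to the metric
`d_w`: `H^t(Z) = lim_{ε → 0} inf { Σᵢ (diam Uᵢ)^t : Z ⊆ ⋃ᵢ Uᵢ, diam Uᵢ < ε }`. -/
noncomputable def hausW (w : FB k N A → ℝ) (t : ℝ) (Z : Set (PathSpace k N A)) : ℝ≥0∞ :=
  ⨆ (ε : ℝ≥0∞) (_ : 0 < ε),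
    ⨅ (U : ℕ → Set (PathSpace k N A)) (_ : Z ⊆ ⋃ n, U n)
      (_ : ∀ n, diamW w (U n) < ε), ∑' n, diamW w (U n) ^ t

lemma natCast_mul_add (n i : ℕ) : ((n * k + i : ℕ) : Fin k) = (i : Fin k) := by
  push_cast
  simp [Fin.natCast_self]

/-- Transport of edges between levels governed by the same matrix (the diagram is
stationary with period `k`). -/
def Edge.cast {i j : ℕ} (h : (i : Fin k) = (j : Fin k)) (e : Edge k N A i) :
    Edge k N A j where
  rg := e.rg
  src := e.src
  idx := Fin.cast (by rw [h]) e.idx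

/-- The cylinder set `[γ e]` of a finite path `γ` (of length `m`) extended by one
further edge `e` at level `m`. -/
def cylExt {m : ℕ} (γ : FinPath k N A m) (e : Edge k N A m) : Set (PathSpace k N A) :=
  Cyl γ ∩ { x | x.1 m = e }

lemma measurableSet_cylExt {m : ℕ} (γ : FinPath k N A m) (e : Edge k N A m) :
    MeasurableSet (cylExt γ e) :=
  (measurableSet_cyl γ).inter (measurableSet_coord m fun f => f = e)

/-- The cylinder set `[λ μ]` of the concatenation of `λ ∈ F^{nk}B` with `μ ∈ F^{k}B`
(the diagram being stationary of period `k`, `μ` concatenates onto `λ`). -/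
def cylCat {n : ℕ} (lam : FinPath k N A (n * k)) (η : FinPath k N A k) :
    Set (PathSpace k N A) :=
  Cyl lam ∩ { x | (x.1 (n * k)).rg = η.rg } ∩
    ⋂ i : Fin k,
      { x | x.1 (n * k + (i : ℕ)) = Edge.cast (natCast_mul_add n (i : ℕ)).symm (η.edge i) }

lemma measurableSet_cylCat {n : ℕ} (lam : FinPath k N A (n * k)) (η : FinPath k N A k) :
    MeasurableSet (cylCat lam η) :=
  ((measurableSet_cyl lam).inter
      (measurableSet_coord (n * k) (fun e => e.rg = η.rg))).inter
    (MeasurableSet.iInter fun i => measurableSet_coord (n * k + (i : ℕ))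
      (fun e => e = Edge.cast (natCast_mul_add n (i : ℕ)).symm (η.edge i)))



end KBratteli

namespace KBratteli

variable {k N : ℕ} [NeZero k] {A : Fin k → Matrix (Fin N) (Fin N) ℕ}

section L2

variable (M : MeasureTheory.Measure (PathSpace k N A)) [MeasureTheory.IsFiniteMeasure M]

/-- The indicator function `χ_{[λ]}` of a cylinder set, as an element of `L²(X_B, M)`. -/
noncomputable def chi {ℓ : ℕ} (lam : FinPath k N A ℓ) : Lp ℂ 2 M :=
  indicatorConstLp 2 (measurableSet_cyl lam) (measure_ne_top M _) (1 : ℂ)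

/-- The indicator function `χ_{[γ e]}` of the cylinder of a path `γ` extended by one
further edge `e`, as an element of `L²(X_B, M)`. -/
noncomputable def chiE {m : ℕ} (γ : FinPath k N A m) (e : Edge k N A m) : Lp ℂ 2 M :=
  indicatorConstLp 2 (measurableSet_cylExt γ e) (measure_ne_top M _) (1 : ℂ)

/-- The indicator function `χ_{[λ μ]}` of the cylinder of the concatenation of
`λ ∈ F^{nk}B` and `μ ∈ F^{k}B`, as an element of `L²(X_B, M)`. -/
noncomputable def chiC {n : ℕ} (lam : FinPath k N A (n * k)) (η : FinPath k N A k) :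
    Lp ℂ 2 M :=
  indicatorConstLp 2 (measurableSet_cylCat lam η) (measure_ne_top M _) (1 : ℂ)

/-- The constant function `1` in `L²(X_B, M)`. -/
noncomputable def oneL2 : Lp ℂ 2 M :=
  indicatorConstLp 2 MeasurableSet.univ (measure_ne_top M _) (1 : ℂ)

/-- `Ṽ_m`, the linear span in `L²(X_B, M)` of the indicators of cylinders of paths of
length `m`. -/
noncomputable def Vt (m : ℕ) : Submodule ℂ (Lp ℂ 2 M) :=
  Submodule.span ℂ (Set.range fun lam : FinPath k N A m => chi M lam)

/-- `𝒲_n = 𝒱_{n+1} ⊓ 𝒱_n^⊥` where `𝒱_n = Ṽ_{nk}`. -/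
noncomputable def Wn (n : ℕ) : Submodule ℂ (Lp ℂ 2 M) :=
  Vt M ((n + 1) * k) ⊓ (Vt M (n * k))ᗮ

/-- `E_{-1}`: the subspace of constant functions. -/
noncomputable def Eneg : Submodule ℂ (Lp ℂ 2 M) :=
  Submodule.span ℂ {oneL2 M}

/-- `E_0 = span{ M([v])⁻¹ χ_{[v]} − M([v'])⁻¹ χ_{[v']} : v ≠ v' ∈ V₀ }`. -/
noncomputable def Ezero : Submodule ℂ (Lp ℂ 2 M) :=
  Submodule.span ℂ
    { f | ∃ v v' : Fin N, v ≠ v' ∧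
        f = (((M (Cyl (vertexPath v))).toReal : ℂ))⁻¹ • chi M (vertexPath v)
            - (((M (Cyl (vertexPath v'))).toReal : ℂ))⁻¹ • chi M (vertexPath v') }

/-- `E_γ = span{ M([γe])⁻¹ χ_{[γe]} − M([γe'])⁻¹ χ_{[γe']} }` over distinct edges
`e ≠ e'` with range `s(γ)`. -/
noncomputable def Esub {m : ℕ} (γ : FinPath k N A m) : Submodule ℂ (Lp ℂ 2 M) :=
  Submodule.span ℂ
    { f | ∃ e e' : Edge k N A m, e ≠ e' ∧ e.rg = γ.src ∧ e'.rg = γ.src ∧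
        f = (((M (cylExt γ e)).toReal : ℂ))⁻¹ • chiE M γ e
            - (((M (cylExt γ e')).toReal : ℂ))⁻¹ • chiE M γ e' }

noncomputable instance (m : ℕ) : FiniteDimensional ℂ (Vt M m) :=
  FiniteDimensional.span_of_finite ℂ (Set.finite_range _)

noncomputable instance : FiniteDimensional ℂ (Eneg M) :=
  FiniteDimensional.span_of_finite ℂ (Set.finite_singleton _)

/-- `Ξ_q`: the orthogonal projection of `L²(X_B, M)` onto `R_q = Ṽ_{qk}`. -/
noncomputable def Xi (q : ℕ) : Lp ℂ 2 M →L[ℂ] Lp ℂ 2 M :=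
  (Vt M (q * k)).subtypeL.comp ((Vt M (q * k)).orthogonalProjectionOnto)

/-- `Ξ_{-1}`: the orthogonal projection onto the constants `R_{-1}`. -/
noncomputable def XiNeg : Lp ℂ 2 M →L[ℂ] Lp ℂ 2 M :=
  (Eneg M).subtypeL.comp ((Eneg M).orthogonalProjectionOnto)

/-- `P_q = Ξ_q − Ξ_{q-1}` (with `Ξ_{-1}` the projection onto the constants). -/
noncomputable def Pq : ℕ → (Lp ℂ 2 M →L[ℂ] Lp ℂ 2 M)
  | 0 => Xi M 0 - XiNeg M
  | (q + 1) => Xi M (q + 1) - Xi M q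


/-- `R_{q-1}` for `q ∈ ℕ`, with the convention `R_{-1} = ` constants. -/
noncomputable def Rprev : ℕ → Submodule ℂ (Lp ℂ 2 M)
  | 0 => Eneg M
  | (q + 1) => Vt M (q * k)

/-- The domain of the Dirac operator `D`. -/
noncomputable def domD (α : ℕ → ℝ) : Set (Lp ℂ 2 M) :=
  { f | Summable fun q : ℕ => α q ^ 2 * ‖Pq M q f‖ ^ 2 }

/-- The Dirac operator `D f = Σ_q α_q P_q f`. -/
noncomputable def opD (α : ℕ → ℝ) (f : Lp ℂ 2 M) : Lp ℂ 2 M :=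
  ∑' q : ℕ, ((α q : ℂ)) • Pq M q f

end L2

end KBratteli

/-!
The cylinder `[γ]` of a path of length `m` is the disjoint union of the cylinders `[γe]`, `e` an
edge with range `s(γ)`, and all cylinders have positive measure (by the cylinder formula, since
`ρ_i > 0` when `A_i x = ρ_i x` with `x > 0` and `A_i` has a nonzero row). The indicator `χ_[γe]` is
`M([γe])` times its normalization, and `M([γ])⁻¹ χ_[γ]` is the `M`-weighted average of the
normalizations, so `χ_[γ]` together with the differences of normalized indicators spans every
`χ_[γe]`. A normalized indicator `M([γe])⁻¹ χ_[γe]` has inner product `1` or `0` with `χ_[μ]` for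
`|μ| ≤ |γ|`, according as `[γ] ⊆ [μ]` or the two cylinders are disjoint; hence the differences are
orthogonal to `Ṽ_{|γ|}`. So `Ṽ_{m+1} = Ṽ_m ⊕ ⨆_{|γ| = m} E_γ`, and iterating from `m = nk` to
`m = (n+1)k` identifies `𝒲_n`. Level `0` is the same argument with the whole space in place of `[γ]`.
-/

theorem indicatorConstLp_eq_sum_of_pairwiseDisjoint {α E ι : Type*} [MeasurableSpace α]
    {μ : Measure α} [NormedAddCommGroup E] {p : ℝ≥0∞} {u : Set α} {s : Finset ι}
    {t : ι → Set α} (hu : MeasurableSet u) (hμu : μ u ≠ ∞) (ht : ∀ i, MeasurableSet (t i))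
    (hμt : ∀ i, μ (t i) ≠ ∞) (hdisj : (s : Set ι).PairwiseDisjoint t)
    (hut : u = ⋃ i ∈ s, t i) (c : E) :
    indicatorConstLp p hu hμu c = ∑ i ∈ s, indicatorConstLp p (ht i) (hμt i) c := by
  subst hut
  induction s using Finset.induction_on with
  | empty => simp
  | @insert a s ha ih =>
    rw [Finset.coe_insert, Set.pairwiseDisjoint_insert] at hdisj
    have hU : MeasurableSet (⋃ i ∈ s, t i) := Finset.measurableSet_biUnion s fun i _ => ht i
    have hμU : μ (⋃ i ∈ s, t i) ≠ ∞ := measure_biUnion_finset_le s t |>.trans_lt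
      (ENNReal.sum_lt_top.2 fun i _ => (hμt i).lt_top) |>.ne
    have hdisj' : Disjoint (t a) (⋃ i ∈ s, t i) := Set.disjoint_iUnion₂_right.2 fun i hi =>
      hdisj.2 i hi (ne_of_mem_of_not_mem hi ha).symm
    simp_rw [Finset.set_biUnion_insert]
    rw [indicatorConstLp_disjoint_union (ht a) hU (hμt a) hμU hdisj', Finset.sum_insert ha,
      ih hdisj.1 hU hμU]

theorem inner_indicatorConstLp_one_sub_normalized_eq_zero {α : Type*} [MeasurableSpace α]
    {μ : Measure α} {s C t t' : Set α} (hs : MeasurableSet s) (ht : MeasurableSet t)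
    (ht' : MeasurableSet t') (hμs : μ s ≠ ∞) (hμt : μ t ≠ ∞) (hμt' : μ t' ≠ ∞)
    (htC : t ⊆ C) (ht'C : t' ⊆ C) (hC : C ⊆ s ∨ Disjoint C s) (h0 : μ t ≠ 0) (h0' : μ t' ≠ 0) :
    inner ℂ (indicatorConstLp 2 hs hμs (1 : ℂ))
      (((μ t).toReal : ℂ)⁻¹ • indicatorConstLp 2 ht hμt (1 : ℂ)
        - ((μ t').toReal : ℂ)⁻¹ • indicatorConstLp 2 ht' hμt' (1 : ℂ)) = 0 := by
  have key : ∀ {u : Set α} (hu : MeasurableSet u) (hμu : μ u ≠ ∞), u ⊆ C → μ u ≠ 0 →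
      inner ℂ (indicatorConstLp 2 hs hμs (1 : ℂ))
        (((μ u).toReal : ℂ)⁻¹ • indicatorConstLp 2 hu hμu (1 : ℂ)) = if C ⊆ s then 1 else 0 := by
    intro u hu hμu huC hu0
    rw [inner_smul_right, L2.inner_indicatorConstLp_one_indicatorConstLp_one]
    split_ifs with hCs
    · rw [Set.inter_eq_right.2 (huC.trans hCs), measureReal_def]
      exact inv_mul_cancel₀ (by exact_mod_cast ENNReal.toReal_ne_zero.2 ⟨hu0, hμu⟩)
    · have : s ∩ u = ∅ :=
        Set.disjoint_iff_inter_eq_empty.1 ((hC.resolve_left hCs).mono_left huC).symm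
      simp [this]
  rw [inner_sub_right, key ht hμt htC h0, key ht' hμt' ht'C h0', sub_self]

theorem mem_span_sum_sup_span_sub {𝕜 V ι : Type*} [Field 𝕜] [AddCommGroup V] [Module 𝕜 V]
    {s : Finset ι} {c : ι → 𝕜} {w : ι → V} (hc : ∀ i ∈ s, c i ≠ 0) (hsum : ∑ i ∈ s, c i ≠ 0)
    {e : ι} (he : e ∈ s) :
    w e ∈ Submodule.span 𝕜 {∑ i ∈ s, w i} ⊔
      Submodule.span 𝕜 {v | ∃ i ∈ s, ∃ j ∈ s, i ≠ j ∧ v = (c i)⁻¹ • w i - (c j)⁻¹ • w j} := by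
  set C := ∑ i ∈ s, c i
  -- `C⁻¹ • ∑ w` is the `c`-weighted average of the normalized vectors `(c i)⁻¹ • w i`
  have hdecomp : w e = (c e / C) • ∑ i ∈ s, w i
      + ∑ i ∈ s, (c e * c i / C) • ((c e)⁻¹ • w e - (c i)⁻¹ • w i) := by
    simp only [smul_sub, Finset.sum_sub_distrib, smul_smul, ← Finset.sum_smul, Finset.smul_sum]
    have hnorm : ∑ i ∈ s, c e * c i / C * (c e)⁻¹ = 1 := by
      rw [← Finset.sum_mul, ← Finset.sum_div, ← Finset.mul_sum, mul_div_assoc, div_self hsum,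
        mul_one, mul_inv_cancel₀ (hc e he)]
    have hcancel : ∀ i ∈ s, (c e * c i / C * (c i)⁻¹) • w i = (c e / C) • w i := fun i hi => by
      congr 1
      field_simp [hc i hi]
    rw [hnorm, one_smul, Finset.sum_congr rfl hcancel, add_sub_cancel]
  rw [hdecomp]
  refine add_mem (Submodule.mem_sup_left (Submodule.smul_mem _ _ (Submodule.subset_span rfl)))
    (Submodule.mem_sup_right (Submodule.sum_mem _ fun i hi => Submodule.smul_mem _ _ ?_))
  obtain rfl | hne := eq_or_ne e i
  · rw [sub_self]; exact Submodule.zero_mem _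
  · exact Submodule.subset_span ⟨e, he, i, hi, hne, rfl⟩

theorem ofReal_toReal_measure_ne_zero {α : Type*} [MeasurableSpace α] {μ : Measure α}
    [IsFiniteMeasure μ] {s : Set α} (h : μ s ≠ 0) : ((μ s).toReal : ℂ) ≠ 0 := by
  exact_mod_cast ENNReal.toReal_ne_zero.2 ⟨h, measure_ne_top μ s⟩

theorem Submodule.inf_orthogonal_eq_of_le_sup {𝕜 E : Type*} [RCLike 𝕜] [NormedAddCommGroup E]
    [InnerProductSpace 𝕜 E] {K V S : Submodule 𝕜 E} (hS : S ≤ V ⊓ Kᗮ) (hV : V ≤ K ⊔ S) :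
    V ⊓ Kᗮ = S := by
  refine le_antisymm ?_ hS
  calc V ⊓ Kᗮ ≤ (S ⊔ K) ⊓ Kᗮ := inf_le_inf_right _ (sup_comm K S ▸ hV)
    _ = S ⊔ K ⊓ Kᗮ := sup_inf_assoc_of_le K (hS.trans inf_le_right)
    _ = S := by rw [K.inf_orthogonal_eq_bot, sup_bot_eq]

theorem pos_of_mulVec_eq_smul {n : Type*} [Fintype n] {B : Matrix n n ℝ} {x : n → ℝ} {r : ℝ}
    (hB : ∀ i j, 0 ≤ B i j) (hx : ∀ i, 0 < x i) (hBx : B.mulVec x = r • x) {a b : n}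
    (hab : 0 < B a b) : 0 < r := by
  have hra : r * x a = ∑ j, B a j * x j := by
    simpa [Matrix.mulVec, dotProduct] using (congrFun hBx a).symm
  have : 0 < r * x a := hra ▸ (mul_pos hab (hx b)).trans_le
    (Finset.single_le_sum (fun j _ => mul_nonneg (hB a j) (hx j).le) (Finset.mem_univ b))
  exact pos_of_mul_pos_left this (hx a).le

namespace KBratteli

section

variable {k N : ℕ} [NeZero k] {A : Fin k → Matrix (Fin N) (Fin N) ℕ}

theorem FinPath.ext_of_rg_of_edge {ℓ : ℕ} {γ γ' : FinPath k N A ℓ} (h0 : γ.rg = γ'.rg)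
    (he : ∀ i, γ.edge i = γ'.edge i) : γ = γ' := by
  obtain ⟨v, e, h1, h2⟩ := γ
  obtain ⟨v', e', h1', h2'⟩ := γ'
  obtain rfl : v = v' := funext fun i => by
    induction i using Fin.induction with
    | zero => exact h0
    | succ j _ => rw [← h2 j, ← h2' j]; exact congrArg Edge.src (he j)
  obtain rfl : e = e' := funext he
  rfl

theorem FinPath.eq_vertexPath (lam : FinPath k N A 0) : lam = vertexPath lam.rg :=
  FinPath.ext_of_rg_of_edge rfl fun i => i.elim0

theorem cyl_subset_or_disjoint {p m : ℕ} (hpm : p ≤ m) (γ : FinPath k N A m)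
    (μ : FinPath k N A p) : Cyl γ ⊆ Cyl μ ∨ Disjoint (Cyl γ) (Cyl μ) := by
  refine or_iff_not_imp_right.2 fun h => ?_
  obtain ⟨x, hxγ, hxμ⟩ := Set.not_disjoint_iff.1 h
  intro y hy
  refine ⟨hy.1.trans (hxγ.1.symm.trans hxμ.1), fun i => ?_⟩
  exact (hy.2 (Fin.castLE hpm i)).trans ((hxγ.2 (Fin.castLE hpm i)).symm.trans (hxμ.2 i))

def FinPath.extend {m : ℕ} (γ : FinPath k N A m) (e : Edge k N A m) (he : e.rg = γ.src) :
    FinPath k N A (m + 1) where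
  vtx := Fin.snoc γ.vtx e.src
  edge := Fin.snoc (α := fun i : Fin (m + 1) => Edge k N A i) γ.edge e
  rg_eq i := by
    induction i using Fin.lastCases with
    | last => simpa [FinPath.src] using he
    | cast j => simpa using γ.rg_eq j
  src_eq i := by
    induction i using Fin.lastCases with
    | last => simp
    | cast j => simpa only [Fin.succ_castSucc, Fin.snoc_castSucc] using γ.src_eq j

theorem cyl_extend {m : ℕ} (γ : FinPath k N A m) (e : Edge k N A m) (he : e.rg = γ.src) :
    Cyl (γ.extend e he) = cylExt γ e := by
  have hrg : (γ.extend e he).rg = γ.rg := by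
    change Fin.snoc (α := fun _ => Fin N) γ.vtx e.src 0 = γ.vtx 0
    rw [← Fin.castSucc_zero, Fin.snoc_castSucc]
  have hedge : ∀ j : Fin m, (γ.extend e he).edge j.castSucc = γ.edge j :=
    Fin.snoc_castSucc (α := fun i : Fin (m + 1) => Edge k N A i) _ _
  have hlast : (γ.extend e he).edge (Fin.last m) = e :=
    Fin.snoc_last (α := fun i : Fin (m + 1) => Edge k N A i) _ _
  ext x
  constructor
  · rintro ⟨h0, hi⟩
    exact ⟨⟨h0.trans hrg, fun j => (hi j.castSucc).trans (hedge j)⟩, (hi _).trans hlast⟩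
  · rintro ⟨⟨h0, hi⟩, hm⟩
    refine ⟨h0.trans hrg.symm, fun i => ?_⟩
    induction i using Fin.lastCases with
    | last => exact hm.trans hlast.symm
    | cast j => exact (hi j).trans (hedge j).symm

def FinPath.init {m : ℕ} (lam : FinPath k N A (m + 1)) : FinPath k N A m where
  vtx := Fin.init lam.vtx
  edge := Fin.init lam.edge
  rg_eq i := lam.rg_eq i.castSucc
  src_eq i := lam.src_eq i.castSucc

theorem cyl_eq_cylExt_init {m : ℕ} (lam : FinPath k N A (m + 1)) :
    Cyl lam = cylExt lam.init (lam.edge (Fin.last m)) := by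
  ext x
  constructor
  · rintro ⟨h0, hi⟩
    exact ⟨⟨h0, fun j => hi j.castSucc⟩, hi (Fin.last m)⟩
  · rintro ⟨⟨h0, hi⟩, hm⟩
    refine ⟨h0, fun i => ?_⟩
    induction i using Fin.lastCases with
    | last => exact hm
    | cast j => exact hi j

theorem FinPath.rg_edge_last_eq_src_init {m : ℕ} (lam : FinPath k N A (m + 1)) :
    (lam.edge (Fin.last m)).rg = lam.init.src :=
  lam.rg_eq (Fin.last m)

noncomputable instance (n : ℕ) : Fintype (Edge k N A n) := Fintype.ofFinite _

noncomputable def FinPath.nextEdges {m : ℕ} (γ : FinPath k N A m) : Finset (Edge k N A m) :=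
  Finset.univ.filter fun e => e.rg = γ.src

theorem FinPath.mem_nextEdges {m : ℕ} {γ : FinPath k N A m} {e : Edge k N A m} :
    e ∈ γ.nextEdges ↔ e.rg = γ.src := by
  simp [FinPath.nextEdges]

theorem cyl_eq_biUnion_cylExt {m : ℕ} (γ : FinPath k N A m) :
    Cyl γ = ⋃ e ∈ γ.nextEdges, cylExt γ e := by
  ext x
  simp only [Set.mem_iUnion, FinPath.mem_nextEdges, exists_prop]
  refine ⟨fun hx => ⟨x.1 m, ?_, hx, rfl⟩, fun ⟨_, _, hx, _⟩ => hx⟩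
  rw [← FinPath.ext_of_rg_of_edge (γ := prefixPath x m) hx.1 hx.2]
  rfl

theorem pairwiseDisjoint_cylExt {m : ℕ} (γ : FinPath k N A m) (s : Set (Edge k N A m)) :
    s.PairwiseDisjoint (cylExt γ) := fun _ _ _ _ hne =>
  Set.disjoint_left.2 fun _ hx hx' => hne (hx.2.symm.trans hx'.2)

theorem univ_eq_iUnion_cyl_vertexPath :
    (Set.univ : Set (PathSpace k N A)) = ⋃ v ∈ (Finset.univ : Finset (Fin N)), Cyl (vertexPath v) :=
  Eq.symm <| Set.eq_univ_of_forall fun x =>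
    Set.mem_biUnion (Finset.mem_coe.2 (Finset.mem_univ (x.1 0).rg)) ⟨rfl, fun i => i.elim0⟩

theorem pairwiseDisjoint_cyl_vertexPath (s : Set (Fin N)) :
    s.PairwiseDisjoint (fun v => Cyl (vertexPath (A := A) v)) := fun _ _ _ _ hne =>
  Set.disjoint_left.2 fun _ hx hx' => hne (hx.1.symm.trans hx'.1)

def CylindersPositive (M : Measure (PathSpace k N A)) : Prop :=
  ∀ ℓ (lam : FinPath k N A ℓ), M (Cyl lam) ≠ 0

variable {M : Measure (PathSpace k N A)}

theorem measure_cyl_eq_sum {m : ℕ} (γ : FinPath k N A m) :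
    M (Cyl γ) = ∑ e ∈ γ.nextEdges, M (cylExt γ e) := by
  rw [cyl_eq_biUnion_cylExt γ,
    measure_biUnion_finset (pairwiseDisjoint_cylExt γ _) fun e _ => measurableSet_cylExt γ e]

theorem sum_measure_cyl_vertexPath [IsProbabilityMeasure M] :
    ∑ v, M (Cyl (vertexPath (A := A) v)) = 1 := by
  rw [← measure_biUnion_finset (pairwiseDisjoint_cyl_vertexPath _) fun v _ => measurableSet_cyl _,
    ← univ_eq_iUnion_cyl_vertexPath, measure_univ]

theorem measure_cylExt_ne_zero (hpos : CylindersPositive M) {m : ℕ}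
    (γ : FinPath k N A m) {e : Edge k N A m} (he : e.rg = γ.src) : M (cylExt γ e) ≠ 0 :=
  cyl_extend γ e he ▸ hpos _ _

theorem cylindersPositive_of_eq_Mval {ρ : Fin k → ℝ} {x : Fin N → ℝ}
    (hrow : ∀ (i : Fin k) (a : Fin N), 2 ≤ ∑ b, A i a b) (hxpos : ∀ v, 0 < x v)
    (hxeig : ∀ i, ((A i).map (Nat.cast : ℕ → ℝ)).mulVec x = ρ i • x)
    (hM : ∀ lam : FB k N A, M (Cyl lam.2) = ENNReal.ofReal (Mval ρ x lam)) :
    CylindersPositive M := by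
  intro ℓ lam
  have hρ : ∀ i, 0 < ρ i := fun i => by
    obtain ⟨b, -, hb⟩ :=
      Finset.exists_ne_zero_of_sum_ne_zero (zero_lt_two.trans_le (hrow i lam.rg)).ne'
    exact pos_of_mulVec_eq_smul (fun _ _ => Nat.cast_nonneg _) hxpos (hxeig i)
      (b := b) (Nat.cast_pos.2 (Nat.pos_of_ne_zero hb))
  have hMval : 0 < Mval ρ x ⟨ℓ, lam⟩ :=
    mul_pos (inv_pos.2 (Finset.prod_pos fun i _ => pow_pos (hρ i) _)) (hxpos _)
  rw [hM ⟨ℓ, lam⟩]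
  exact (ENNReal.ofReal_pos.2 hMval).ne'

variable [IsFiniteMeasure M]

theorem chiE_eq_chi_extend {m : ℕ} (γ : FinPath k N A m) {e : Edge k N A m}
    (he : e.rg = γ.src) : chiE M γ e = chi M (γ.extend e he) := by
  simp only [chiE, chi, cyl_extend]

theorem chi_eq_chiE_init {m : ℕ} (lam : FinPath k N A (m + 1)) :
    chi M lam = chiE M lam.init (lam.edge (Fin.last m)) := by
  simp only [chiE, chi, cyl_eq_cylExt_init]

theorem chi_eq_sum_chiE {m : ℕ} (γ : FinPath k N A m) :
    chi M γ = ∑ e ∈ γ.nextEdges, chiE M γ e :=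
  indicatorConstLp_eq_sum_of_pairwiseDisjoint _ _ _ _ (pairwiseDisjoint_cylExt γ _)
    (cyl_eq_biUnion_cylExt γ) 1

theorem oneL2_eq_sum_chi : oneL2 M = ∑ v, chi M (vertexPath (A := A) v) :=
  indicatorConstLp_eq_sum_of_pairwiseDisjoint _ _ _ _ (pairwiseDisjoint_cyl_vertexPath _)
    univ_eq_iUnion_cyl_vertexPath 1

theorem chiE_mem_Vt {m : ℕ} (γ : FinPath k N A m) {e : Edge k N A m} (he : e.rg = γ.src) :
    chiE M γ e ∈ Vt M (m + 1) := by
  rw [chiE_eq_chi_extend γ he]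
  exact Submodule.subset_span ⟨_, rfl⟩

theorem Vt_le_Vt_succ (m : ℕ) : Vt M m ≤ Vt M (m + 1) := by
  refine Submodule.span_le.2 ?_
  rintro _ ⟨γ, rfl⟩
  show chi M γ ∈ Vt M (m + 1)
  rw [chi_eq_sum_chiE γ]
  exact Submodule.sum_mem _ fun e he => chiE_mem_Vt γ (FinPath.mem_nextEdges.1 he)

theorem Vt_mono : Monotone (Vt M) :=
  monotone_nat_of_le_succ Vt_le_Vt_succ

theorem Esub_le_Vt_succ {m : ℕ} (γ : FinPath k N A m) : Esub M γ ≤ Vt M (m + 1) := by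
  rw [Esub, Submodule.span_le]
  rintro _ ⟨e, e', -, he, he', rfl⟩
  exact sub_mem (Submodule.smul_mem _ _ (chiE_mem_Vt γ he))
    (Submodule.smul_mem _ _ (chiE_mem_Vt γ he'))

theorem Vt_isOrtho_Esub (hpos : CylindersPositive M) {p m : ℕ}
    (hpm : p ≤ m) (γ : FinPath k N A m) : Vt M p ⟂ Esub M γ := by
  rw [Vt, Esub, Submodule.isOrtho_span]
  rintro _ ⟨μ, rfl⟩ _ ⟨e, e', -, he, he', rfl⟩
  exact inner_indicatorConstLp_one_sub_normalized_eq_zero _ _ _ _ _ _ Set.inter_subset_left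
    Set.inter_subset_left (cyl_subset_or_disjoint hpm γ μ) (measure_cylExt_ne_zero hpos γ he)
    (measure_cylExt_ne_zero hpos γ he')

theorem Vt_succ_le_sup_iSup_Esub (hpos : CylindersPositive M)
    (m : ℕ) : Vt M (m + 1) ≤ Vt M m ⊔ ⨆ γ : FinPath k N A m, Esub M γ := by
  refine Submodule.span_le.2 ?_
  rintro _ ⟨lam, rfl⟩
  set γ := lam.init
  have hsum : ∑ e ∈ γ.nextEdges, ((M (cylExt γ e)).toReal : ℂ) ≠ 0 := by
    rw [← Complex.ofReal_sum, ← ENNReal.toReal_sum fun _ _ => measure_ne_top _ _,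
      ← measure_cyl_eq_sum]
    exact ofReal_toReal_measure_ne_zero (hpos m γ)
  have hmem := mem_span_sum_sup_span_sub (w := chiE M γ)
    (fun e he => ofReal_toReal_measure_ne_zero (measure_cylExt_ne_zero hpos γ
      (FinPath.mem_nextEdges.1 he))) hsum
    (FinPath.mem_nextEdges.2 (FinPath.rg_edge_last_eq_src_init lam))
  rw [← chi_eq_sum_chiE, ← chi_eq_chiE_init] at hmem
  have hchi : Submodule.span ℂ {chi M γ} ≤ Vt M m :=
    (Submodule.span_singleton_le_iff_mem _ _).2 (Submodule.subset_span ⟨γ, rfl⟩)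
  have hdiff : Submodule.span ℂ {f | ∃ e ∈ γ.nextEdges, ∃ e' ∈ γ.nextEdges, e ≠ e' ∧
      f = ((M (cylExt γ e)).toReal : ℂ)⁻¹ • chiE M γ e
        - ((M (cylExt γ e')).toReal : ℂ)⁻¹ • chiE M γ e'} ≤ ⨆ γ' : FinPath k N A m, Esub M γ' := by
    refine le_iSup_of_le γ (Submodule.span_mono ?_)
    rintro _ ⟨e, he, e', he', hne, rfl⟩
    exact ⟨e, e', hne, FinPath.mem_nextEdges.1 he, FinPath.mem_nextEdges.1 he', rfl⟩
  exact sup_le_sup hchi hdiff hmem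

theorem Vt_add_le (hpos : CylindersPositive M) (p : ℕ) :
    ∀ j, Vt M (p + j) ≤ Vt M p ⊔ ⨆ (γ : FB k N A) (_ : p ≤ γ.1 ∧ γ.1 < p + j), Esub M γ.2
  | 0 => le_sup_left
  | j + 1 => by
    refine (Vt_succ_le_sup_iSup_Esub hpos (p + j)).trans (sup_le ?_ ?_)
    · exact (Vt_add_le hpos p j).trans
        (sup_le_sup_left (biSup_mono fun γ hγ => ⟨hγ.1, by omega⟩) _)
    · exact le_sup_of_le_right
        (iSup_le fun γ => le_iSup₂_of_le (⟨p + j, γ⟩ : FB k N A)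
          ⟨Nat.le_add_right p j, Nat.lt_succ_self _⟩ le_rfl)

theorem Eneg_isOrtho_Ezero (hpos : CylindersPositive M) :
    Eneg M ⟂ Ezero M := by
  rw [Eneg, Ezero, Submodule.isOrtho_span]
  rintro _ rfl _ ⟨v, v', -, rfl⟩
  exact inner_indicatorConstLp_one_sub_normalized_eq_zero _ _ _ _ _ _ (Set.subset_univ _)
    (Set.subset_univ _) (Or.inl subset_rfl) (hpos 0 _) (hpos 0 _)

theorem Vt_zero_eq_Eneg_sup_Ezero [IsProbabilityMeasure M]
    (hpos : CylindersPositive M) : Vt M 0 = Eneg M ⊔ Ezero M := by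
  refine le_antisymm (Submodule.span_le.2 ?_) (sup_le ?_ (Submodule.span_le.2 ?_))
  · rintro _ ⟨lam, rfl⟩
    have hsum : ∑ v, ((M (Cyl (vertexPath (A := A) v))).toReal : ℂ) ≠ 0 := by
      rw [← Complex.ofReal_sum, ← ENNReal.toReal_sum fun _ _ => measure_ne_top _ _,
        sum_measure_cyl_vertexPath]
      norm_num
    have hmem := mem_span_sum_sup_span_sub (w := fun v => chi M (vertexPath (A := A) v))
      (fun v _ => ofReal_toReal_measure_ne_zero (hpos 0 _)) hsum (Finset.mem_univ lam.rg)
    rw [← oneL2_eq_sum_chi, ← FinPath.eq_vertexPath] at hmem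
    have hdiff : Submodule.span ℂ {f | ∃ v ∈ Finset.univ, ∃ v' ∈ Finset.univ, v ≠ v' ∧
        f = ((M (Cyl (vertexPath v))).toReal : ℂ)⁻¹ • chi M (vertexPath (A := A) v)
          - ((M (Cyl (vertexPath v'))).toReal : ℂ)⁻¹ • chi M (vertexPath v')} ≤ Ezero M := by
      refine Submodule.span_mono ?_
      rintro _ ⟨v, -, v', -, hne, rfl⟩
      exact ⟨v, v', hne, rfl⟩
    exact sup_le_sup_left hdiff _ hmem
  · rw [Eneg, Submodule.span_singleton_le_iff_mem, oneL2_eq_sum_chi]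
    exact Submodule.sum_mem _ fun v _ => Submodule.subset_span ⟨_, rfl⟩
  · rintro _ ⟨v, v', -, rfl⟩
    exact sub_mem (Submodule.smul_mem _ _ (Submodule.subset_span ⟨_, rfl⟩))
      (Submodule.smul_mem _ _ (Submodule.subset_span ⟨_, rfl⟩))

theorem Wn_eq_iSup_Esub (hpos : CylindersPositive M) (n : ℕ) :
    Wn M n = ⨆ (γ : FB k N A) (_ : n * k ≤ γ.1 ∧ γ.1 ≤ (n + 1) * k - 1), Esub M γ.2 := by
  have hk : 0 < k := Nat.pos_of_ne_zero (NeZero.ne k)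
  have hnk : (n + 1) * k = n * k + k := Nat.succ_mul n k
  refine Submodule.inf_orthogonal_eq_of_le_sup
    (iSup₂_le fun γ hγ => le_inf ((Esub_le_Vt_succ γ.2).trans (Vt_mono (by omega)))
      (Vt_isOrtho_Esub hpos hγ.1 γ.2).ge) ?_
  rw [hnk]
  exact (Vt_add_le hpos (n * k) k).trans
    (sup_le_sup_left (biSup_mono fun γ hγ => ⟨hγ.1, by omega⟩) _)

end

theorem statement13_general (k N : ℕ) [NeZero k]
    (A : Fin k → Matrix (Fin N) (Fin N) ℕ)
    (hrow : ∀ (i : Fin k) (a : Fin N), 2 ≤ ∑ b, A i a b)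
    (ρ : Fin k → ℝ)
    (x : Fin N → ℝ) (hxpos : ∀ v, 0 < x v)
    (hxeig : ∀ i, ((A i).map (Nat.cast : ℕ → ℝ)).mulVec x = ρ i • x)
    (M : MeasureTheory.Measure (PathSpace k N A)) [MeasureTheory.IsProbabilityMeasure M]
    (hM : ∀ lam : FB k N A, M (Cyl lam.2) = ENNReal.ofReal (Mval ρ x lam)) :
    ((∀ f ∈ Eneg M, ∀ g ∈ Ezero M, (inner ℂ f g : ℂ) = 0) ∧
      Vt M 0 = Eneg M ⊔ Ezero M) ∧
    (∀ n : ℕ, Wn M n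
        = ⨆ (γ : FB k N A) (_ : n * k ≤ γ.1 ∧ γ.1 ≤ (n + 1) * k - 1), Esub M γ.2) := by
  have hpos := cylindersPositive_of_eq_Mval hrow hxpos hxeig hM
  exact ⟨⟨fun f hf g hg => (Eneg_isOrtho_Ezero hpos).inner_eq hf hg,
    Vt_zero_eq_Eneg_sup_Ezero hpos⟩, fun n => Wn_eq_iSup_Esub hpos n⟩

/-- In `L²(X_B, M)`: `𝒱₀ = E₋₁ ⊕ E₀` (an orthogonal direct sum),
and for every `n`, `𝒲_n` equals the linear span of the union of the eigenspaces
`E_γ` over the finite paths `γ` with `nk ≤ |γ| ≤ (n+1)k − 1`. -/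
theorem statement13 (k N : ℕ) [NeZero k] [NeZero N]
    (A : Fin k → Matrix (Fin N) (Fin N) ℕ)
    (hcomm : ∀ i j, A i * A j = A j * A i)
    (hirr : IrreducibleFamily A)
    (hrow : ∀ (i : Fin k) (a : Fin N), 2 ≤ ∑ b, A i a b)
    (hAirr : MatIrreducible ((List.ofFn A).prod))
    (ρ : Fin k → ℝ) (hρ : ∀ i, ρ i = specRad (A i))
    (x : Fin N → ℝ) (hxpos : ∀ v, 0 < x v) (hxsum : ∑ v, x v = 1)
    (hxeig : ∀ i, ((A i).map (Nat.cast : ℕ → ℝ)).mulVec x = ρ i • x)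
    (M : MeasureTheory.Measure (PathSpace k N A)) [MeasureTheory.IsProbabilityMeasure M]
    (hM : ∀ lam : FB k N A, M (Cyl lam.2) = ENNReal.ofReal (Mval ρ x lam)) :
    ((∀ f ∈ Eneg M, ∀ g ∈ Ezero M, (inner ℂ f g : ℂ) = 0) ∧
      Vt M 0 = Eneg M ⊔ Ezero M) ∧
    (∀ n : ℕ, Wn M n
        = ⨆ (γ : FB k N A) (_ : n * k ≤ γ.1 ∧ γ.1 ≤ (n + 1) * k - 1), Esub M γ.2) :=
  statement13_general k N A hrow ρ x hxpos hxeig M hM
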